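/- Let (X, d) be a metric space, λ_s ≥ 0, δ ≥ 0, and let S : X → ℝ be λ_s-Lipschitz. Let Q₁, Q₀, U₁, U₀ be sets of points in X (labeled anomalies, labeled normal points, unlabeled anomalies, unlabeled normal points respectively). Assume the covering condition: for every u_a ∈ U₁ there exists x_a ∈ Q₁ with d(u_a, x_a) ≤ δ, and for every u_n ∈ U₀ there exists x_n ∈ Q₀ with d(u_n, x_n) ≤ δ. Assume S ranks all labeled data correctly with margin: for every x_a ∈ Q₁ and every x_n ∈ Q₀, S(x_a) − S(x_n) ≥ 2·δ·λ_s. Then S ranks all unlabeled data correctly: for every u_a ∈ U₁ and every u_n ∈ U₀, S(u_a) ≥ S(u_n). -/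
import Mathlib

/-- Theorem 1 of the paper: if the labeled anomalies `Q₁` cover the unlabeled
anomalies `U₁` within radius `δ`, the labeled normal points `Q₀` cover the
unlabeled normal points `U₀` within radius `δ`, and the `lamS`-Lipschitz score `S`
ranks all labeled data correctly with margin `2·δ·lamS`, then `S` ranks all
unlabeled data correctly. -/
theorem ranking_generalizes
    {X : Type*} [MetricSpace X] (S : X → ℝ) (lamS δ : ℝ)
    (hlam : 0 ≤ lamS) (hδ : 0 ≤ δ)
    (hLip : ∀ x x' : X, |S x - S x'| ≤ lamS * dist x x')
    (Q₁ Q₀ U₁ U₀ : Set X)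
    (hcover₁ : ∀ ua ∈ U₁, ∃ xa ∈ Q₁, dist ua xa ≤ δ)
    (hcover₀ : ∀ un ∈ U₀, ∃ xn ∈ Q₀, dist un xn ≤ δ)
    (hmargin : ∀ xa ∈ Q₁, ∀ xn ∈ Q₀, S xa - S xn ≥ 2 * δ * lamS) :
    ∀ ua ∈ U₁, ∀ un ∈ U₀, S ua ≥ S un := by
  intro ua hua un hun
  obtain ⟨xa, hxa, hda⟩ := hcover₁ ua hua
  obtain ⟨xn, hxn, hdn⟩ := hcover₀ un hun
  have h1 := (abs_le.mp (hLip ua xa)).1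
  have h2 := (abs_le.mp (hLip un xn)).2
  have hm := hmargin xa hxa xn hxn
  have hla : lamS * dist ua xa ≤ lamS * δ := mul_le_mul_of_nonneg_left hda hlam
  have hln : lamS * dist un xn ≤ lamS * δ := mul_le_mul_of_nonneg_left hdn hlam
  nlinarith
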